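/- Let M be a nonnegative real n×n matrix. Then there exists a vector v with all entries strictly positive such that M v ≥ v entrywise if and only if no permutation of the indices puts M in block lower-triangular form ((M11, 0), (M21, M22)) where the spectral radius of the square block M11 is strictly less than 1. (In particular, if there exists such a positive vector v with M v ≥ v, then the spectral radius of M is at least 1.) -/

import Mathlib

/-!
Call `x` superinvariant for `A` if `0 ≤ x` and `x ≤ A x`; these vectors form a cone. For a
nonnegative `A`, a nonzero superinvariant vector satisfies `x ≤ Aᵏ x` for all `k`, so `Aᵏ` does not
tend to `0` and Gelfand's formula forces the spectral radius to be at least `1`. Conversely, if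
`A w = μ w` with `‖μ‖ ≥ 1`, the triangle inequality makes `|w|` superinvariant.

A positive superinvariant vector of `M` restricts to one of any block `S` with `M i j = 0` for
`i ∈ S`, `j ∉ S`, which gives one direction. For the other, let `Z` be the set of indices at which
some superinvariant vector is positive; summing, a single superinvariant `x` is positive on `Z`.
If `M i j > 0` with `i ∉ Z` and `j ∈ Z`, then raising `x i` to `(M x) i > 0` keeps `x`
superinvariant, which is absurd; so the complement of `Z` is such a block. Extending by zero, its
block has no nonzero superinvariant vector, hence all its eigenvalues have modulus `< 1`.
-/

open Filter Topology
open scoped NNReal ENNReal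

theorem spectrum.tendsto_pow_atTop_nhds_zero_of_spectralRadius_lt_one
    {A : Type*} [NormedRing A] [NormedAlgebra ℂ A] [CompleteSpace A] {a : A}
    (ha : spectralRadius ℂ a < 1) : Tendsto (fun n : ℕ => a ^ n) atTop (𝓝 0) := by
  obtain ⟨r, hρr, hr1⟩ := ENNReal.lt_iff_exists_nnreal_btwn.mp ha
  have hroot : ∀ᶠ n : ℕ in atTop, (‖a ^ n‖₊ : ℝ≥0∞) ^ (1 / n : ℝ) < r :=
    (spectrum.pow_nnnorm_pow_one_div_tendsto_nhds_spectralRadius a).eventually_lt_const hρr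
  refine squeeze_zero_norm' ?_ (tendsto_pow_atTop_nhds_zero_of_lt_one r.2 (mod_cast hr1))
  filter_upwards [hroot, eventually_ne_atTop 0] with n hn hn0
  rw [one_div, ← ENNReal.coe_rpow_of_nonneg _ (by positivity), ENNReal.coe_lt_coe] at hn
  have : ‖a ^ n‖₊ < r ^ n :=
    calc ‖a ^ n‖₊ = (‖a ^ n‖₊ ^ (n⁻¹ : ℝ)) ^ n := (NNReal.rpow_inv_natCast_pow _ hn0).symm
      _ < r ^ n := pow_lt_pow_left₀ hn (by positivity) hn0
  exact_mod_cast this.le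

namespace Matrix

variable {ι : Type*} [Fintype ι]

def superinvariantCone (A : Matrix ι ι ℝ) : PointedCone ℝ (ι → ℝ) where
  carrier := {x | 0 ≤ x ∧ x ≤ A *ᵥ x}
  add_mem' {x y} hx hy := ⟨add_nonneg hx.1 hy.1, by
    rw [mulVec_add]; exact add_le_add hx.2 hy.2⟩
  zero_mem' := ⟨le_rfl, by rw [mulVec_zero]⟩
  smul_mem' c x hx := ⟨smul_nonneg c.2 hx.1, by
    rw [Nonneg.mk_smul, mulVec_smul]; exact smul_le_smul_of_nonneg_left hx.2 c.2⟩

variable {A : Matrix ι ι ℝ}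

theorem mulVec_mono_of_nonneg (hA : ∀ i j, 0 ≤ A i j) {u v : ι → ℝ} (h : u ≤ v) :
    A *ᵥ u ≤ A *ᵥ v := fun i =>
  Finset.sum_le_sum fun j _ => mul_le_mul_of_nonneg_left (h j) (hA i j)

theorem mul_le_mulVec_apply (hA : ∀ i j, 0 ≤ A i j) {x : ι → ℝ} (hx : 0 ≤ x) (i j : ι) :
    A i j * x j ≤ (A *ᵥ x) i :=
  Finset.single_le_sum (f := fun j => A i j * x j) (fun j _ => mul_nonneg (hA i j) (hx j))
    (Finset.mem_univ j)

theorem le_pow_mulVec_of_mem_superinvariantCone [DecidableEq ι] (hA : ∀ i j, 0 ≤ A i j)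
    {x : ι → ℝ} (hx : x ∈ A.superinvariantCone) (k : ℕ) : x ≤ (A ^ k) *ᵥ x := by
  induction k with
  | zero => rw [pow_zero, one_mulVec]
  | succ k ih =>
    rw [pow_succ', ← mulVec_mulVec]
    exact hx.2.trans (mulVec_mono_of_nonneg hA ih)

section SpectralRadius

attribute [local instance] Matrix.linftyOpNormedRing Matrix.linftyOpNormedAlgebra

theorem one_le_spectralRadius_of_mem_superinvariantCone [DecidableEq ι]
    (hA : ∀ i j, 0 ≤ A i j) {x : ι → ℝ} (hx : x ∈ A.superinvariantCone) (hx0 : x ≠ 0) :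
    1 ≤ spectralRadius ℂ (A.map Complex.ofReal) := by
  by_contra! hρ
  have hpow : Tendsto (fun k : ℕ => A ^ k) atTop (𝓝 0) := by
    have h := (continuous_id.matrix_map Complex.continuous_re).tendsto 0 |>.comp
      (spectrum.tendsto_pow_atTop_nhds_zero_of_spectralRadius_lt_one hρ)
    have hre : ∀ k : ℕ, (A.map Complex.ofReal ^ k).map Complex.re = A ^ k := fun k => by
      change (A.map Complex.ofRealHom ^ k).map Complex.re = _
      rw [← Matrix.map_pow, map_map]
      exact ext fun i j => Complex.ofReal_re _
    simpa [Function.comp_def, hre] using h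
  have hlim : Tendsto (fun k : ℕ => (A ^ k) *ᵥ x) atTop (𝓝 0) := by
    simpa [Function.comp_def] using
      ((continuous_id.matrix_mulVec continuous_const).tendsto 0).comp hpow
  exact hx0 (le_antisymm (ge_of_tendsto' hlim (le_pow_mulVec_of_mem_superinvariantCone hA hx))
    hx.1)

theorem exists_one_le_norm_mem_spectrum_of_mem_superinvariantCone [DecidableEq ι]
    (hA : ∀ i j, 0 ≤ A i j) {x : ι → ℝ} (hx : x ∈ A.superinvariantCone) (hx0 : x ≠ 0) :
    ∃ μ ∈ spectrum ℂ (A.map Complex.ofReal), 1 ≤ ‖μ‖ := by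
  have : Nonempty ι := (Function.ne_iff.mp hx0).nonempty
  by_contra! h
  refine (one_le_spectralRadius_of_mem_superinvariantCone hA hx hx0).not_gt ?_
  simpa using spectrum.spectralRadius_lt_of_forall_lt (r := 1) _ fun μ hμ => by
    exact_mod_cast h μ hμ

end SpectralRadius

theorem exists_mem_superinvariantCone_of_mem_spectrum [DecidableEq ι] (hA : ∀ i j, 0 ≤ A i j)
    {μ : ℂ} (hμ : μ ∈ spectrum ℂ (A.map Complex.ofReal)) (h1 : 1 ≤ ‖μ‖) :
    ∃ x ∈ A.superinvariantCone, x ≠ 0 := by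
  rw [← spectrum_toLin', ← Module.End.hasEigenvalue_iff_mem_spectrum] at hμ
  obtain ⟨w, hw⟩ := hμ.exists_hasEigenvector
  have hAw : A.map Complex.ofReal *ᵥ w = μ • w := by
    simpa using hw.apply_eq_smul
  refine ⟨fun i => ‖w i‖, ⟨fun i => norm_nonneg _, fun i => ?_⟩, ?_⟩
  · calc ‖w i‖ ≤ ‖μ‖ * ‖w i‖ := le_mul_of_one_le_left (norm_nonneg _) h1
      _ = ‖(A.map Complex.ofReal *ᵥ w) i‖ := by rw [hAw, Pi.smul_apply, smul_eq_mul, norm_mul]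
      _ ≤ ∑ j, ‖A i j * w j‖ := norm_sum_le _ _
      _ = (A *ᵥ fun j => ‖w j‖) i := by
        simp only [norm_mul, Complex.norm_real, Real.norm_of_nonneg (hA _ _)]; rfl
  · obtain ⟨i, hi⟩ := Function.ne_iff.mp hw.2
    exact Function.ne_iff.mpr ⟨i, by simpa using hi⟩

theorem update_mem_superinvariantCone [DecidableEq ι] (hA : ∀ i j, 0 ≤ A i j) {x : ι → ℝ}
    (hx : x ∈ A.superinvariantCone) (i : ι) :
    Function.update x i ((A *ᵥ x) i) ∈ A.superinvariantCone := by
  have hle : x ≤ Function.update x i ((A *ᵥ x) i) :=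
    le_update_iff.mpr ⟨hx.2 i, fun _ _ => le_rfl⟩
  exact ⟨hx.1.trans hle, update_le_iff.mpr ⟨mulVec_mono_of_nonneg hA hle i,
    fun j _ => (hx.2 j).trans (mulVec_mono_of_nonneg hA hle j)⟩⟩

open Classical in
noncomputable def superinvariantSupport (A : Matrix ι ι ℝ) : Finset ι :=
  Finset.univ.filter fun i => ∃ x ∈ A.superinvariantCone, 0 < x i

theorem mem_superinvariantSupport_of_pos {x : ι → ℝ} (hx : x ∈ A.superinvariantCone) {i : ι}
    (hi : 0 < x i) : i ∈ A.superinvariantSupport := by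
  classical
  exact Finset.mem_filter.mpr ⟨Finset.mem_univ i, x, hx, hi⟩

theorem exists_pos_on_superinvariantSupport (A : Matrix ι ι ℝ) :
    ∃ x ∈ A.superinvariantCone, ∀ i ∈ A.superinvariantSupport, 0 < x i := by
  classical
  choose! y hyC hypos using fun i (hi : i ∈ A.superinvariantSupport) => (Finset.mem_filter.mp hi).2
  refine ⟨∑ i ∈ A.superinvariantSupport, y i, Submodule.sum_mem _ hyC, fun i hi => ?_⟩
  calc 0 < y i i := hypos i hi
    _ ≤ (∑ j ∈ A.superinvariantSupport, y j) i := by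
      rw [Finset.sum_apply]
      exact Finset.single_le_sum (f := fun j => y j i) (fun j hj => (hyC j hj).1 i) hi

theorem apply_eq_zero_of_notMem_superinvariantSupport [DecidableEq ι] (hA : ∀ i j, 0 ≤ A i j)
    {i j : ι} (hi : i ∉ A.superinvariantSupport) (hj : j ∈ A.superinvariantSupport) :
    A i j = 0 := by
  obtain ⟨x, hx, hxpos⟩ := A.exists_pos_on_superinvariantSupport
  by_contra hij
  refine hi (mem_superinvariantSupport_of_pos (update_mem_superinvariantCone hA hx i) ?_)
  rw [Function.update_self]
  exact (mul_pos ((hA i j).lt_of_ne' hij) (hxpos j hj)).trans_le (mul_le_mulVec_apply hA hx.1 i j)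

theorem mulVec_apply_eq_submatrix_mulVec {S : Finset ι} {x : ι → ℝ} {i : S}
    (h : ∀ j ∉ S, A i j * x j = 0) :
    (A *ᵥ x) i = (A.submatrix (↑) (↑) *ᵥ fun j : S => x j) i := by
  simp only [mulVec, dotProduct, submatrix_apply]
  rw [← Finset.sum_subset (Finset.subset_univ S) fun j _ hj => h j hj, ← Finset.sum_coe_sort S]

theorem restrict_mem_superinvariantCone_submatrix {S : Finset ι}
    (hS : ∀ i ∈ S, ∀ j ∉ S, A i j = 0) {x : ι → ℝ} (hx : x ∈ A.superinvariantCone) :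
    (fun i : S => x i) ∈ (A.submatrix (↑) (↑)).superinvariantCone :=
  ⟨fun i => hx.1 i, fun i => by
    rw [← mulVec_apply_eq_submatrix_mulVec fun j hj => by rw [hS i i.2 j hj, zero_mul]]
    exact hx.2 i⟩

theorem extend_mem_superinvariantCone [DecidableEq ι] (hA : ∀ i j, 0 ≤ A i j) {S : Finset ι}
    {y : S → ℝ} (hy : y ∈ (A.submatrix (↑) (↑)).superinvariantCone) :
    (fun i => if h : i ∈ S then y ⟨i, h⟩ else 0) ∈ A.superinvariantCone := by
  set x : ι → ℝ := fun i => if h : i ∈ S then y ⟨i, h⟩ else 0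
  have hx0 : 0 ≤ x := fun i => by
    by_cases h : i ∈ S
    · simpa [x, h] using hy.1 ⟨i, h⟩
    · simp [x, h]
  refine ⟨hx0, fun i => ?_⟩
  by_cases h : i ∈ S
  · have hxy : (fun j : S => x j) = y := funext fun j => dif_pos j.2
    rw [mulVec_apply_eq_submatrix_mulVec (i := ⟨i, h⟩) fun j hj => by simp [x, hj], hxy]
    simpa [x, h] using hy.2 ⟨i, h⟩
  · simpa [x, h] using mulVec_mono_of_nonneg hA hx0 i

theorem eq_zero_of_mem_superinvariantCone_submatrix_compl [DecidableEq ι]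
    (hA : ∀ i j, 0 ≤ A i j) {y : (A.superinvariantSupportᶜ : Finset ι) → ℝ}
    (hy : y ∈ (A.submatrix (↑) (↑)).superinvariantCone) : y = 0 := by
  refine funext fun i => le_antisymm ?_ (hy.1 i)
  by_contra! hi
  refine Finset.mem_compl.mp i.2 (mem_superinvariantSupport_of_pos
    (extend_mem_superinvariantCone hA hy) ?_)
  rwa [dif_pos i.2]

theorem exists_ne_zero_mem_superinvariantCone_iff [DecidableEq ι] (hA : ∀ i j, 0 ≤ A i j) :
    (∃ x ∈ A.superinvariantCone, x ≠ 0) ↔ ∃ μ ∈ spectrum ℂ (A.map Complex.ofReal), 1 ≤ ‖μ‖ :=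
  ⟨fun ⟨_, hx, hx0⟩ => exists_one_le_norm_mem_spectrum_of_mem_superinvariantCone hA hx hx0,
    fun ⟨_, hμ, h1⟩ => exists_mem_superinvariantCone_of_mem_spectrum hA hμ h1⟩

end Matrix

/-- A nonnegative real `n × n` matrix `M` admits a strictly positive vector `v`
with `M v ≥ v` entrywise if and only if no permutation of the indices puts `M`
in block lower-triangular form with a leading square block all of whose
eigenvalues have absolute value (spectral radius) strictly less than `1`.
The block decomposition is encoded by a nonempty set `S` of indices with
`M i j = 0` whenever `i ∈ S` and `j ∉ S`. -/
theorem simple_obstruction_positive_vector_iff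
    (n : ℕ) (M : Matrix (Fin n) (Fin n) ℝ) (hM : ∀ i j, 0 ≤ M i j) :
    (∃ v : Fin n → ℝ, (∀ i, 0 < v i) ∧ ∀ i, v i ≤ M.mulVec v i) ↔
      ¬ ∃ S : Finset (Fin n), S.Nonempty ∧
        (∀ i ∈ S, ∀ j ∉ S, M i j = 0) ∧
        (∀ μ ∈ spectrum ℂ
            (Matrix.of fun i j : {x // x ∈ S} => (M i.1 j.1 : ℂ)),
          ‖μ‖ < 1) := by
  have hM' {S : Finset (Fin n)} (i j : S) : 0 ≤ M.submatrix Subtype.val Subtype.val i j :=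
    hM i j
  constructor
  · rintro ⟨v, hv, hvM⟩ ⟨S, ⟨i, hi⟩, hS, hspec⟩
    have hvS := M.restrict_mem_superinvariantCone_submatrix hS ⟨fun i => (hv i).le, hvM⟩
    obtain ⟨μ, hμ, h1⟩ := (Matrix.exists_ne_zero_mem_superinvariantCone_iff hM').mp
      ⟨_, hvS, Function.ne_iff.mpr ⟨⟨i, hi⟩, (hv i).ne'⟩⟩
    exact (hspec μ hμ).not_ge h1
  · intro hno
    by_contra hv
    obtain ⟨x, hx, hxpos⟩ := M.exists_pos_on_superinvariantSupport
    refine hno ⟨M.superinvariantSupportᶜ, ?_, fun i hi j hj => ?_, fun μ hμ => ?_⟩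
    · by_contra hempty
      rw [Finset.not_nonempty_iff_eq_empty, Finset.compl_eq_empty_iff] at hempty
      exact hv ⟨x, fun i => hxpos i (hempty ▸ Finset.mem_univ i), hx.2⟩
    · exact Matrix.apply_eq_zero_of_notMem_superinvariantSupport hM
        (Finset.mem_compl.mp hi) (Finset.notMem_compl.mp hj)
    · by_contra! h1
      obtain ⟨y, hy, hy0⟩ :=
        (Matrix.exists_ne_zero_mem_superinvariantCone_iff hM').mpr ⟨μ, hμ, h1⟩
      exact hy0 (Matrix.eq_zero_of_mem_superinvariantCone_submatrix_compl hM hy)
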